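/- For any element χ of the exterior algebra Θ, the variational derivative of ∂χ vanishes: δ(∂χ)/δθ = 0. -/

import Mathlib

/-- The generators `θ^i` of the exterior algebra over `ℝ` on countably many generators. -/
noncomputable def θg (i : ℕ) : ExteriorAlgebra ℝ (ℕ →₀ ℝ) :=
  ExteriorAlgebra.ι ℝ (Finsupp.single i 1)

/-- The monomial `θ^{i₁} ⋯ θ^{i_p}` associated to a list of indices. -/
noncomputable def mon (l : List ℕ) : ExteriorAlgebra ℝ (ℕ →₀ ℝ) :=
  (l.map θg).prod


lemma mon_nil : mon [] = 1 := rfl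
lemma mon_cons (t : ℕ) (l : List ℕ) : mon (t :: l) = θg t * mon l := by
  simp [mon]
lemma mon_append (l l' : List ℕ) : mon (l ++ l') = mon l * mon l' := by
  simp [mon]

lemma span_mon_top : Submodule.span ℝ (Set.range mon) = ⊤ := by
  rw [eq_top_iff]
  rintro x -
  induction x using ExteriorAlgebra.induction with
  | algebraMap r =>
      have h : (algebraMap ℝ (ExteriorAlgebra ℝ (ℕ →₀ ℝ)) r) = r • mon [] := by
        simp [mon, Algebra.algebraMap_eq_smul_one]
      rw [h]
      exact Submodule.smul_mem _ _ (Submodule.subset_span ⟨[], rfl⟩)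
  | ι m =>
      have hm : ExteriorAlgebra.ι ℝ m = m.sum fun i a => a • mon [i] := by
        conv_lhs => rw [← Finsupp.sum_single m]
        rw [map_finsuppSum]
        apply Finsupp.sum_congr
        intro i _
        rw [mon_cons, mon_nil, mul_one, θg, ← map_smul, Finsupp.smul_single,
          smul_eq_mul, mul_one]
      rw [hm]
      exact Submodule.finsuppSum_mem _ _ _ _ fun i _ =>
        Submodule.smul_mem _ _ (Submodule.subset_span ⟨[i], rfl⟩)
  | mul a b ha hb =>
      induction ha using Submodule.span_induction with
      | mem x hx =>
          induction hb using Submodule.span_induction with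
          | mem y hy =>
              obtain ⟨l, rfl⟩ := hx; obtain ⟨l', rfl⟩ := hy
              rw [← mon_append]
              exact Submodule.subset_span ⟨l ++ l', rfl⟩
          | zero => simp
          | add y z _ _ hy hz => rw [mul_add]; exact add_mem hy hz
          | smul r y _ hy => rw [mul_smul_comm]; exact Submodule.smul_mem _ _ hy
      | zero => simp
      | add x y _ _ hx hy => rw [add_mul]; exact add_mem hx hy
      | smul r x _ hx => rw [smul_mul_assoc]; exact Submodule.smul_mem _ _ hx
  | add a b ha hb => exact add_mem ha hb

noncomputable def pdshift (pd : ℕ → Module.End ℝ (ExteriorAlgebra ℝ (ℕ →₀ ℝ))) :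
    ℕ → Module.End ℝ (ExteriorAlgebra ℝ (ℕ →₀ ℝ))
  | 0 => 0
  | (s+1) => pd s

section
variable (D : Module.End ℝ (ExteriorAlgebra ℝ (ℕ →₀ ℝ)))
    (pd : ℕ → Module.End ℝ (ExteriorAlgebra ℝ (ℕ →₀ ℝ)))

lemma le_foldr_max : ∀ (l : List ℕ) (t : ℕ), t ∈ l → t ≤ l.foldr max 0 := by
  intro l
  induction l with
  | nil => simp
  | cons a l ih =>
      intro t ht
      rcases List.mem_cons.mp ht with h | h
      · subst h; exact le_max_left _ _
      · exact le_trans (ih t h) (le_max_right _ _)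

lemma pd_mon (hpd1 : ∀ s, pd s 1 = 0)
    (hpdθ : ∀ s t x, pd s (θg t * x) = (if s = t then x else 0) - θg t * pd s x) :
    ∀ (l : List ℕ) (s : ℕ), s ∉ l → pd s (mon l) = 0 := by
  intro l
  induction l with
  | nil => intro s _; rw [mon_nil]; exact hpd1 s
  | cons t l ih =>
      intro s hs
      have hst : s ≠ t := fun h => hs (h ▸ List.mem_cons_self)
      have hsl : s ∉ l := fun h => hs (List.mem_cons_of_mem _ h)
      rw [mon_cons, hpdθ, if_neg hst, ih s hsl, mul_zero, zero_sub, neg_zero]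

lemma pd_eventually (hpd1 : ∀ s, pd s 1 = 0)
    (hpdθ : ∀ s t x, pd s (θg t * x) = (if s = t then x else 0) - θg t * pd s x)
    (χ : ExteriorAlgebra ℝ (ℕ →₀ ℝ)) : ∃ M, ∀ s, M ≤ s → pd s χ = 0 := by
  have hχ : χ ∈ Submodule.span ℝ (Set.range mon) := by
    rw [span_mon_top]; trivial
  induction hχ using Submodule.span_induction with
  | mem x hx =>
      obtain ⟨l, rfl⟩ := hx
      refine ⟨l.foldr max 0 + 1, fun s hs => pd_mon pd hpd1 hpdθ l s fun hmem => ?_⟩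
      have := le_foldr_max l s hmem
      omega
  | zero => exact ⟨0, fun s _ => map_zero _⟩
  | add x y _ _ ihx ihy =>
      obtain ⟨M1, h1⟩ := ihx; obtain ⟨M2, h2⟩ := ihy
      exact ⟨max M1 M2, fun s hs => by
        rw [map_add, h1 s (le_trans (le_max_left _ _) hs),
          h2 s (le_trans (le_max_right _ _) hs), add_zero]⟩
  | smul r x _ ihx =>
      obtain ⟨M, h⟩ := ihx
      exact ⟨M, fun s hs => by rw [map_smul, h s hs, smul_zero]⟩

lemma comm_mon (hder : ∀ a b, D (a * b) = D a * b + a * D b)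
    (hθ : ∀ i, D (θg i) = θg (i + 1))
    (hpd1 : ∀ s, pd s 1 = 0)
    (hpdθ : ∀ s t x, pd s (θg t * x) = (if s = t then x else 0) - θg t * pd s x) :
    ∀ (l : List ℕ) (s : ℕ),
      pd s (D (mon l)) = D (pd s (mon l)) + pdshift pd s (mon l) := by
  have hD1 : D 1 = 0 := by
    have h := hder 1 1
    simp only [mul_one, one_mul] at h
    have h2 : D 1 + D 1 = D 1 + 0 := by rw [add_zero]; exact h.symm
    exact (add_left_cancel h2)
  intro l
  induction l with
  | nil =>
      intro s
      cases s <;> simp [mon_nil, hD1, hpd1, pdshift]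
  | cons t l ih =>
      intro s
      have key : (if s = t + 1 then mon l else 0) - θg t * (pdshift pd s (mon l))
          = pdshift pd s (θg t * mon l) := by
        cases s with
        | zero => simp [pdshift]
        | succ k =>
            simp only [pdshift, hpdθ, Nat.succ_eq_add_one, add_left_inj]
      rw [mon_cons, hder, hθ, map_add, hpdθ, hpdθ, ih s, mul_add, hpdθ, map_sub,
        hder, hθ, ← key]
      have hif : D (if s = t then mon l else 0) = (if s = t then D (mon l) else 0) := by
        split <;> simp
      rw [hif]
      abel

lemma comm_pd (hder : ∀ a b, D (a * b) = D a * b + a * D b)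
    (hθ : ∀ i, D (θg i) = θg (i + 1))
    (hpd1 : ∀ s, pd s 1 = 0)
    (hpdθ : ∀ s t x, pd s (θg t * x) = (if s = t then x else 0) - θg t * pd s x)
    (χ : ExteriorAlgebra ℝ (ℕ →₀ ℝ)) (s : ℕ) :
    pd s (D χ) = D (pd s χ) + pdshift pd s χ := by
  have hχ : χ ∈ Submodule.span ℝ (Set.range mon) := by
    rw [span_mon_top]; trivial
  induction hχ using Submodule.span_induction with
  | mem x hx => obtain ⟨l, rfl⟩ := hx; exact comm_mon D pd hder hθ hpd1 hpdθ l s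
  | zero => simp
  | add x y _ _ ihx ihy => simp only [map_add, ihx, ihy]; abel
  | smul r x _ ihx => simp only [map_smul, ihx, smul_add]

end

/-- `IsVarDer D pd χ v` asserts that `v` is the variational derivative
`δχ/δθ = Σ_{s≥0} (−1)^s ∂^s (∂χ/∂θ^s)` (a finite sum on each element). -/
def IsVarDer (D : Module.End ℝ (ExteriorAlgebra ℝ (ℕ →₀ ℝ)))
    (pd : ℕ → Module.End ℝ (ExteriorAlgebra ℝ (ℕ →₀ ℝ)))
    (χ v : ExteriorAlgebra ℝ (ℕ →₀ ℝ)) : Prop :=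
  ∃ N : ℕ, (∀ s, N ≤ s → pd s χ = 0) ∧
    v = ∑ s ∈ Finset.range N, ((-1 : ℝ) ^ s) • ((D ^ s) (pd s χ))

/-- the variational derivative of a total derivative vanishes:
`δ(∂χ)/δθ = 0` for every `χ ∈ Θ`.  Here `D` is the derivation with `Dθ^i = θ^{i+1}` and
`pd s` is the left odd partial derivative `∂/∂θ^s`. -/
theorem stmt7 (D : Module.End ℝ (ExteriorAlgebra ℝ (ℕ →₀ ℝ)))
    (hder : ∀ a b, D (a * b) = D a * b + a * D b)
    (hθ : ∀ i, D (θg i) = θg (i + 1))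
    (pd : ℕ → Module.End ℝ (ExteriorAlgebra ℝ (ℕ →₀ ℝ)))
    (hpd1 : ∀ s, pd s 1 = 0)
    (hpdθ : ∀ s t x, pd s (θg t * x) = (if s = t then x else 0) - θg t * pd s x)
    (χ v : ExteriorAlgebra ℝ (ℕ →₀ ℝ)) (hv : IsVarDer D pd (D χ) v) :
    v = 0 := by
  obtain ⟨N, hN, hvN⟩ := hv
  obtain ⟨M, hM⟩ := pd_eventually pd hpd1 hpdθ χ
  set K := max N (M + 1) with hK
  have hKN : N ≤ K := le_max_left _ _
  have hKM : M + 1 ≤ K := le_max_right _ _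
  have hvK : v = ∑ s ∈ Finset.range K, ((-1 : ℝ) ^ s) • ((D ^ s) (pd s (D χ))) := by
    rw [hvN]
    apply Finset.sum_subset (Finset.range_subset_range.mpr hKN)
    intro s _ hs
    rw [hN s (by simpa using hs), map_zero, smul_zero]
  set F : ℕ → ExteriorAlgebra ℝ (ℕ →₀ ℝ) :=
    fun s => Nat.casesOn s 0 (fun k => ((-1 : ℝ) ^ k) • ((D ^ (k + 1)) (pd k χ))) with hF
  have hterm : ∀ s, ((-1 : ℝ) ^ s) • ((D ^ s) (pd s (D χ))) = F (s + 1) - F s := by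
    intro s
    rw [comm_pd D pd hder hθ hpd1 hpdθ χ s, map_add, smul_add]
    have hpow : ∀ x, (D ^ s) (D x) = (D ^ (s + 1)) x := by
      intro x
      rw [pow_succ, Module.End.mul_apply]
    cases s with
    | zero =>
        simp [hF, pdshift, hpow]
    | succ k =>
        simp only [hF, pdshift, hpow]
        module
  have hvF : v = F K - F 0 := by
    rw [hvK]
    calc ∑ s ∈ Finset.range K, ((-1 : ℝ) ^ s) • ((D ^ s) (pd s (D χ)))
        = ∑ s ∈ Finset.range K, (F (s + 1) - F s) := by
          exact Finset.sum_congr rfl fun s _ => hterm s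
      _ = F K - F 0 := Finset.sum_range_sub F K
  obtain ⟨k, hk⟩ : ∃ k, K = k + 1 := ⟨K - 1, by omega⟩
  have hkM : M ≤ k := by omega
  rw [hvF, hk]
  show ((-1 : ℝ) ^ k) • ((D ^ (k + 1)) (pd k χ)) - F 0 = 0
  rw [hM k hkM, map_zero, smul_zero]
  simp [hF]
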